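/- arXiv:2504.03659 — 10 statements merged into one kernel-verified Lean document; each statement's English description precedes it below -/
import Mathlib

section
/- If α, β, γ are equivalence relations on a set A such that α ⊓ β is the trivial (identity) relation and γ < α, then for any pair (a,b) ∈ α with (a,b) ∉ γ, the pair ((a,a),(b,b)) of elements of the set β = {(x,y) : x β y} is not related by the join (α₀ ⊓ γ₁) ⊔ (γ₀ ⊓ α₁) in the lattice of equivalence relations on β, where for θ an equivalence relation on A, θ₀ relates (x₀,x₁),(y₀,y₁) iff x₀ θ y₀ and θ₁ relates them iff x₁ θ y₁. -/
namespace Paper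

variable {A : Type*}

/-- Relational composition. -/
def Comp (r s : A → A → Prop) : A → A → Prop := fun a b => ∃ x, r a x ∧ s x b

/-- The underlying set of A(β): pairs related by β. -/
def B (β : Setoid A) : Type _ := {p : A × A // β.r p.1 p.2}

/-- θ₀ : compare first coordinates via θ. -/
def lift0 (β θ : Setoid A) : Setoid (B β) :=
  ⟨fun x y => θ.r x.1.1 y.1.1,
    ⟨fun _ => θ.refl _, fun h => θ.symm h, fun h1 h2 => θ.trans h1 h2⟩⟩

/-- θ₁ : compare second coordinates via θ. -/
def lift1 (β θ : Setoid A) : Setoid (B β) :=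
  ⟨fun x y => θ.r x.1.2 y.1.2,
    ⟨fun _ => θ.refl _, fun h => θ.symm h, fun h1 h2 => θ.trans h1 h2⟩⟩

/-- η₀ : kernel of the first projection. -/
def eta0 (β : Setoid A) : Setoid (B β) :=
  ⟨fun x y => x.1.1 = y.1.1, ⟨fun _ => rfl, fun h => h.symm, fun h1 h2 => h1.trans h2⟩⟩

/-- η₁ : kernel of the second projection. -/
def eta1 (β : Setoid A) : Setoid (B β) :=
  ⟨fun x y => x.1.2 = y.1.2, ⟨fun _ => rfl, fun h => h.symm, fun h1 h2 => h1.trans h2⟩⟩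

/-- the relation (β ∘ γ ∘ β) ∩ α. -/
def BGB (α β γ : Setoid A) : A → A → Prop :=
  fun a b => Comp β.r (Comp γ.r β.r) a b ∧ α.r a b

/-- The equivalence relation generated by a relation. -/
def gen (r : A → A → Prop) : Setoid A := Relation.EqvGen.setoid r

/-- The chain γ⁰ = γ, γ^{i+1} = EqvGen((β ∘ γ^i ∘ β) ∩ α). -/
def chain (α β γ : Setoid A) : ℕ → Setoid A
  | 0 => γ
  | (i+1) => gen (BGB α β (chain α β γ i))

theorem stmt0 (α β γ : Setoid A) (hmeet : α ⊓ β = ⊥) (hle : γ ≤ α) (hne : γ ≠ α)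
    (a b : A) (h1 : α.r a b) (h2 : ¬ γ.r a b) :
    ¬ ((lift0 β α ⊓ lift1 β γ) ⊔ (lift0 β γ ⊓ lift1 β α)).r
      ⟨(a, a), β.refl a⟩ ⟨(b, b), β.refl b⟩ := by
  intro h
  -- the meet α ⊓ β is trivial
  have hbot : ∀ x y : A, α.r x y → β.r x y → x = y := by
    intro x y hx hy
    have : (α ⊓ β).r x y := ⟨hx, hy⟩
    rw [hmeet] at this
    exact this
  rw [Setoid.sup_eq_eqvGen] at h
  -- Key invariant, proved by induction on EqvGen
  have key : ∀ p q : B β,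
      Relation.EqvGen (fun x y => (lift0 β α ⊓ lift1 β γ).r x y ∨
        (lift0 β γ ⊓ lift1 β α).r x y) p q →
      (p.1.1 = p.1.2 ↔ q.1.1 = q.1.2) ∧ (p.1.1 = p.1.2 → γ.r p.1.1 q.1.1) := by
    intro p q h
    induction h with
    | rel x y hxy =>
      rcases hxy with ⟨hA, hG⟩ | ⟨hG, hA⟩
      · -- α on first coords, γ on second coords
        have d1 : x.1.1 = x.1.2 → y.1.1 = y.1.2 := fun hx => by
          refine hbot _ _ (α.trans (α.symm hA) ?_) y.2
          rw [hx]; exact hle hG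
        have d2 : y.1.1 = y.1.2 → x.1.1 = x.1.2 := fun hy => by
          refine hbot _ _ (α.trans hA ?_) x.2
          rw [hy]; exact α.symm (hle hG)
        refine ⟨⟨d1, d2⟩, fun hx => ?_⟩
        rw [hx, d1 hx]; exact hG
      · -- γ on first coords, α on second coords
        have d1 : x.1.1 = x.1.2 → y.1.1 = y.1.2 := fun hx => by
          refine hbot _ _ (α.trans (α.symm (hle hG)) ?_) y.2
          rw [hx]; exact hA
        have d2 : y.1.1 = y.1.2 → x.1.1 = x.1.2 := fun hy => by
          refine hbot _ _ (α.trans (hle hG) ?_) x.2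
          rw [hy]; exact α.symm hA
        exact ⟨⟨d1, d2⟩, fun _ => hG⟩
    | refl x => exact ⟨Iff.rfl, fun _ => γ.refl _⟩
    | symm x y _ ih =>
      exact ⟨ih.1.symm, fun hy => γ.symm (ih.2 (ih.1.mpr hy))⟩
    | trans x y z _ _ ih1 ih2 =>
      exact ⟨ih1.1.trans ih2.1, fun hx => γ.trans (ih1.2 hx) (ih2.2 (ih1.1.mp hx))⟩
  have := (key _ _ h).2 rfl
  exact h2 this

end Paper
end

section
/- Let α, β, γ be equivalence relations on a set A with α ⊓ β = ⊥ and γ < α. Then (α₀ ⊓ γ₁) ⊔ (γ₀ ⊓ α₁) is strictly below α₀ ⊓ α₁ in the lattice of equivalence relations on B = {(x,y) : x β y}. -/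
namespace Paper

variable {A : Type*}

theorem stmt1 (α β γ : Setoid A) (hmeet : α ⊓ β = ⊥) (hle : γ ≤ α) (hne : γ ≠ α) :
    (lift0 β α ⊓ lift1 β γ) ⊔ (lift0 β γ ⊓ lift1 β α) < lift0 β α ⊓ lift1 β α := by
  have bot_rel : ∀ x y : A, α.r x y → β.r x y → x = y := by
    intro x y hx hy
    have h : (α ⊓ β) x y := ⟨hx, hy⟩
    rw [hmeet] at h
    exact h
  have hnla : ¬ α ≤ γ := fun h => hne (le_antisymm hle h)
  have hab : ∃ a b : A, α.r a b ∧ ¬ γ.r a b := by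
    by_contra hcon
    push_neg at hcon
    exact hnla (Setoid.le_def.mpr fun {x y} h => hcon x y h)
  obtain ⟨a, b, hab, hnab⟩ := hab
  constructor
  · -- le
    apply sup_le
    · exact fun x y h => ⟨h.1, Setoid.le_def.mp hle h.2⟩
    · exact fun x y h => ⟨Setoid.le_def.mp hle h.1, h.2⟩
  · -- not ge
    intro hge
    set p : B β := ⟨(a, a), β.refl a⟩ with hp
    set q : B β := ⟨(b, b), β.refl b⟩ with hq
    have hrel : ((lift0 β α ⊓ lift1 β γ) ⊔ (lift0 β γ ⊓ lift1 β α)) p q :=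
      hge (show (lift0 β α ⊓ lift1 β α) p q from ⟨hab, hab⟩)
    rw [Setoid.sup_eq_eqvGen] at hrel
    have key : ∀ x y : B β,
        Relation.EqvGen (fun x y => (lift0 β α ⊓ lift1 β γ) x y ∨ (lift0 β γ ⊓ lift1 β α) x y) x y →
        α.r x.1.1 y.1.1 ∧ α.r x.1.2 y.1.2 ∧ (x.1.1 = x.1.2 ↔ y.1.1 = y.1.2) ∧
          (x.1.1 = x.1.2 → γ.r x.1.1 y.1.1) := by
      intro x y h
      induction h with
      | rel x y h =>
        rcases h with ⟨h1, h2⟩ | ⟨h1, h2⟩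
        · refine ⟨h1, Setoid.le_def.mp hle h2, ?_, ?_⟩
          · constructor
            · intro he
              apply bot_rel _ _ _ y.2
              exact α.trans (α.symm h1) (he ▸ Setoid.le_def.mp hle h2)
            · intro he
              apply bot_rel _ _ _ x.2
              exact α.trans h1 (he ▸ α.symm (Setoid.le_def.mp hle h2))
          · intro he
            have hy : y.1.1 = y.1.2 := by
              apply bot_rel _ _ _ y.2
              exact α.trans (α.symm h1) (he ▸ Setoid.le_def.mp hle h2)
            have : γ.r x.1.2 y.1.2 := h2
            rw [← he, ← hy] at this
            exact this
        · refine ⟨Setoid.le_def.mp hle h1, h2, ?_, ?_⟩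
          · constructor
            · intro he
              apply bot_rel _ _ _ y.2
              exact α.trans (α.symm (Setoid.le_def.mp hle h1)) (he ▸ h2)
            · intro he
              apply bot_rel _ _ _ x.2
              exact α.trans (Setoid.le_def.mp hle h1) (he ▸ α.symm h2)
          · intro _
            exact h1
      | refl x => exact ⟨α.refl _, α.refl _, Iff.rfl, fun _ => γ.refl _⟩
      | symm x y h ih =>
        exact ⟨α.symm ih.1, α.symm ih.2.1, ih.2.2.1.symm,
          fun he => γ.symm (ih.2.2.2 (ih.2.2.1.mpr he))⟩
      | trans x y z h1 h2 ih1 ih2 =>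
        exact ⟨α.trans ih1.1 ih2.1, α.trans ih1.2.1 ih2.2.1, ih1.2.2.1.trans ih2.2.2.1,
          fun he => γ.trans (ih1.2.2.2 he) (ih2.2.2.2 (ih1.2.2.1.mp he))⟩
    have := (key p q hrel).2.2.2 rfl
    exact hnab this

end Paper
end

section
/- Let β, γ be equivalence relations on a set A with γ ≤ some equivalence relation α. On B = {(x,y) : x β y}, the equivalence relation δ₁ generated by the intersection of (β ∘ γ ∘ β) with α, lifted to first coordinates, equals η₀ ⊔ (α₀ ⊓ γ₁); that is, writing γ' = EqvGen((β ∘ γ ∘ β) ∩ α), one has γ'₀ = η₀ ⊔ (α₀ ⊓ γ₁). -/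
namespace Paper

variable {A : Type*}

theorem stmt4_aux (α β γ : Setoid A) {a b : A}
    (h : Relation.EqvGen (BGB α β γ) a b) :
    ∀ (pa pb : B β), pa.1.1 = a → pb.1.1 = b →
      (eta0 β ⊔ (lift0 β α ⊓ lift1 β γ)).r pa pb := by
  induction h with
  | rel a b hab =>
    intro pa pb ha hb
    obtain ⟨⟨u, hau, v, huv, hvb⟩, hα⟩ := hab
    have h1 : (eta0 β ⊔ (lift0 β α ⊓ lift1 β γ)).r pa ⟨(a, u), hau⟩ :=
      le_sup_left (α := Setoid (B β)) (a := eta0 β) ha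
    have h2 : (eta0 β ⊔ (lift0 β α ⊓ lift1 β γ)).r ⟨(a, u), hau⟩ ⟨(b, v), β.symm hvb⟩ :=
      le_sup_right (α := Setoid (B β)) (b := lift0 β α ⊓ lift1 β γ) ⟨hα, huv⟩
    have h3 : (eta0 β ⊔ (lift0 β α ⊓ lift1 β γ)).r ⟨(b, v), β.symm hvb⟩ pb :=
      le_sup_left (α := Setoid (B β)) (a := eta0 β) hb.symm
    exact Setoid.trans' _ (Setoid.trans' _ h1 h2) h3
  | refl a =>
    intro pa pb ha hb
    exact le_sup_left (α := Setoid (B β)) (a := eta0 β) (ha.trans hb.symm)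
  | symm a b _ ih =>
    intro pa pb ha hb
    exact Setoid.symm' _ (ih pb pa hb ha)
  | trans a b c _ _ ih1 ih2 =>
    intro pa pb ha hb
    exact Setoid.trans' _ (ih1 pa ⟨(b, b), β.refl b⟩ ha rfl)
      (ih2 ⟨(b, b), β.refl b⟩ pb rfl hb)


theorem stmt4 (α β γ : Setoid A) (hle : γ ≤ α) :
    lift0 β (gen (BGB α β γ)) = eta0 β ⊔ (lift0 β α ⊓ lift1 β γ) := by
  apply le_antisymm
  · intro x y h
    exact stmt4_aux α β γ h x y rfl rfl
  · apply sup_le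
    · intro x y h
      show Relation.EqvGen (BGB α β γ) x.1.1 y.1.1
      rw [show x.1.1 = y.1.1 from h]
      exact Relation.EqvGen.refl _
    · rintro x y ⟨h1, h2⟩
      exact Relation.EqvGen.rel _ _ ⟨⟨x.1.2, x.2, y.1.2, h2, β.symm y.2⟩, h1⟩


end Paper
end

section
/- Let α, β, γ be equivalence relations on a set A with γ ≤ α. With γ' = EqvGen((β ∘ γ ∘ β) ∩ α), in the lattice of equivalence relations on B = {(x,y) : x β y} one has γ'₀ ⊓ γ₁ = α₀ ⊓ γ₁. -/
namespace Paper

variable {A : Type*}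

theorem stmt7 (α β γ : Setoid A) (hle : γ ≤ α) :
    lift0 β (gen (BGB α β γ)) ⊓ lift1 β γ = lift0 β α ⊓ lift1 β γ := by
  have hga : gen (BGB α β γ) ≤ α := by
    intro a b h
    induction h with
    | rel _ _ h => exact h.2
    | refl _ => exact α.refl _
    | symm _ _ _ ih => exact α.symm ih
    | trans _ _ _ _ _ ih1 ih2 => exact α.trans ih1 ih2
  ext x y
  constructor
  · rintro ⟨h0, h1⟩
    exact ⟨hga h0, h1⟩
  · rintro ⟨h0, h1⟩
    refine ⟨Relation.EqvGen.rel _ _ ⟨⟨x.1.2, x.2, y.1.2, h1, β.symm y.2⟩, h0⟩, h1⟩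

end Paper
end

section
/- Let β, θ be equivalence relations on a set A, and let ηᵢ be the kernel of the i-th projection from B = {(x,y) : x β y}. Then θᵢ = ηᵢ ⊔ (θ₀ ⊓ θ₁) in the lattice of equivalence relations on B, for i = 0, 1. -/
namespace Paper

variable {A : Type*}

theorem stmt9 (β θ : Setoid A) :
    lift0 β θ = eta0 β ⊔ (lift0 β θ ⊓ lift1 β θ) ∧
      lift1 β θ = eta1 β ⊔ (lift0 β θ ⊓ lift1 β θ) := by
  constructor
  · apply le_antisymm
    · rw [Setoid.sup_eq_eqvGen, Setoid.le_def]
      intro x y h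
      refine Relation.EqvGen.trans _ (⟨(x.1.1, x.1.1), β.refl _⟩ : B β) _
        (Relation.EqvGen.rel _ _ (Or.inl rfl)) ?_
      refine Relation.EqvGen.trans _ (⟨(y.1.1, y.1.1), β.refl _⟩ : B β) _
        (Relation.EqvGen.rel _ _ (Or.inr ⟨h, h⟩)) ?_
      exact Relation.EqvGen.symm _ _ (Relation.EqvGen.rel _ _ (Or.inl rfl))
    · refine sup_le ?_ inf_le_left
      rw [Setoid.le_def]
      intro x y h
      have h' : x.1.1 = y.1.1 := h
      exact show θ.r _ _ from h' ▸ θ.refl _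
  · apply le_antisymm
    · rw [Setoid.sup_eq_eqvGen, Setoid.le_def]
      intro x y h
      refine Relation.EqvGen.trans _ (⟨(x.1.2, x.1.2), β.refl _⟩ : B β) _
        (Relation.EqvGen.rel _ _ (Or.inl rfl)) ?_
      refine Relation.EqvGen.trans _ (⟨(y.1.2, y.1.2), β.refl _⟩ : B β) _
        (Relation.EqvGen.rel _ _ (Or.inr ⟨h, h⟩)) ?_
      exact Relation.EqvGen.symm _ _ (Relation.EqvGen.rel _ _ (Or.inl rfl))
    · refine sup_le ?_ inf_le_right
      rw [Setoid.le_def]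
      intro x y h
      have h' : x.1.2 = y.1.2 := h
      exact show θ.r _ _ from h' ▸ θ.refl _

end Paper
end

section
/- Let α, β, γ be equivalence relations on a set A forming a pentagon in the lattice of equivalence relations: γ < α, α ⊓ β = γ ⊓ β = ⊥, α ⊔ β = γ ⊔ β. Then on B = {(x,y) : x β y}: (1) γ₀ ⊓ γ₁ ≤ α₀ ⊓ γ₁, γ₀ ⊓ γ₁ ≤ γ₀ ⊓ α₁, and γ₀ ⊓ γ₁ ≤ α₀ ⊓ α₁; (2) α₀ ⊓ α₁ is not below any of α₀ ⊓ γ₁, γ₀ ⊓ α₁, γ₀ ⊓ γ₁. -/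
namespace Paper

variable {A : Type*}

theorem stmt11 (α β γ : Setoid A) (hle : γ ≤ α) (hne : γ ≠ α) (hab : α ⊓ β = ⊥) (hgb : γ ⊓ β = ⊥) (hjoin : α ⊔ β = γ ⊔ β) :
    (lift0 β γ ⊓ lift1 β γ ≤ lift0 β α ⊓ lift1 β γ ∧
      lift0 β γ ⊓ lift1 β γ ≤ lift0 β γ ⊓ lift1 β α ∧
      lift0 β γ ⊓ lift1 β γ ≤ lift0 β α ⊓ lift1 β α) ∧
    (¬ lift0 β α ⊓ lift1 β α ≤ lift0 β α ⊓ lift1 β γ ∧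
      ¬ lift0 β α ⊓ lift1 β α ≤ lift0 β γ ⊓ lift1 β α ∧
      ¬ lift0 β α ⊓ lift1 β α ≤ lift0 β γ ⊓ lift1 β γ) := by

  -- extract a witness pair: α a b but ¬ γ a b
  have hg : ∀ x y : A, γ.r x y → α.r x y := fun x y h => hle h
  have hw : ∃ a b : A, α.r a b ∧ ¬ γ.r a b := by
    by_contra h
    push_neg at h
    apply hne
    apply le_antisymm hle
    intro x y hxy
    exact h x y hxy
  obtain ⟨a, b, hab', hgab⟩ := hw
  constructor
  · refine ⟨fun x y h => ⟨hg _ _ h.1, h.2⟩, fun x y h => ⟨h.1, hg _ _ h.2⟩,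
      fun x y h => ⟨hg _ _ h.1, hg _ _ h.2⟩⟩
  · refine ⟨fun h => ?_, fun h => ?_, fun h => ?_⟩
    · exact hgab (h (x := ⟨(a, a), β.refl a⟩) (y := ⟨(b, b), β.refl b⟩) ⟨hab', hab'⟩).2
    · exact hgab (h (x := ⟨(a, a), β.refl a⟩) (y := ⟨(b, b), β.refl b⟩) ⟨hab', hab'⟩).1
    · exact hgab (h (x := ⟨(a, a), β.refl a⟩) (y := ⟨(b, b), β.refl b⟩) ⟨hab', hab'⟩).1


end Paper
end

section
/- Let α, β, γ be equivalence relations on a set A with γ < α, α ⊓ β = γ ⊓ β = ⊥, α ⊔ β = γ ⊔ β (an N₅ configuration). If on B = {(x,y) : x β y} the equivalence relations α₀ ⊓ γ₁ and γ₀ ⊓ α₁ are comparable, then α₀ ⊓ γ₁ = γ₀ ⊓ α₁ = γ₀ ⊓ γ₁. -/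
namespace Paper

variable {A : Type*}

theorem stmt12 (α β γ : Setoid A) (hle : γ ≤ α) (hne : γ ≠ α) (hab : α ⊓ β = ⊥) (hgb : γ ⊓ β = ⊥) (hjoin : α ⊔ β = γ ⊔ β)
    (hcomp : lift0 β α ⊓ lift1 β γ ≤ lift0 β γ ⊓ lift1 β α ∨
      lift0 β γ ⊓ lift1 β α ≤ lift0 β α ⊓ lift1 β γ) :
    lift0 β α ⊓ lift1 β γ = lift0 β γ ⊓ lift1 β α ∧
      lift0 β γ ⊓ lift1 β α = lift0 β γ ⊓ lift1 β γ := by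
  -- swapping the coordinates of pairs in B interchanges the two relations,
  -- so either comparability hypothesis yields the reverse inequality as well.
  have swap_aux : ∀ θ δ : Setoid A,
      lift0 β θ ⊓ lift1 β δ ≤ lift0 β δ ⊓ lift1 β θ →
      lift0 β δ ⊓ lift1 β θ ≤ lift0 β θ ⊓ lift1 β δ := by
    intro θ δ h
    intro p q hpq
    have hpq' : (lift0 β θ ⊓ lift1 β δ).r ⟨(p.1.2, p.1.1), β.symm p.2⟩
        ⟨(q.1.2, q.1.1), β.symm q.2⟩ := ⟨hpq.2, hpq.1⟩
    have := h hpq'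
    exact ⟨this.2, this.1⟩
  have key : lift0 β α ⊓ lift1 β γ = lift0 β γ ⊓ lift1 β α := by
    rcases hcomp with h | h
    · exact le_antisymm h (swap_aux α γ h)
    · exact le_antisymm (swap_aux γ α h) h
  refine ⟨key, le_antisymm ?_ ?_⟩
  · intro p q hpq
    have : (lift0 β α ⊓ lift1 β γ).r p q := key ▸ hpq
    exact ⟨hpq.1, this.2⟩
  · intro p q hpq
    exact ⟨hpq.1, hle hpq.2⟩

end Paper
end

section
/- Let α, β, γ be equivalence relations on a set A with γ < α and α ⊓ β = γ ⊓ β = ⊥ and α ⊔ β = γ ⊔ β. Then on B = {(x,y) : x β y}: γ₀ ⊔ (α₀ ⊓ α₁) = α₀ and γ₁ ⊔ (α₀ ⊓ α₁) = α₁. -/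
namespace Paper

variable {A : Type*}

theorem stmt13 (α β γ : Setoid A) (hle : γ ≤ α) (hne : γ ≠ α) (hab : α ⊓ β = ⊥) (hgb : γ ⊓ β = ⊥) (hjoin : α ⊔ β = γ ⊔ β) :
    lift0 β γ ⊔ (lift0 β α ⊓ lift1 β α) = lift0 β α ∧
      lift1 β γ ⊔ (lift0 β α ⊓ lift1 β α) = lift1 β α := by
  constructor
  · apply le_antisymm
    · apply sup_le
      · intro p q h
        exact hle h
      · exact inf_le_left
    · intro p q h
      -- h : α.r p.1.1 q.1.1
      have hmid1 : (lift0 β γ ⊔ (lift0 β α ⊓ lift1 β α)).r p ⟨(p.1.1, p.1.1), β.refl _⟩ :=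
        le_sup_left (α := Setoid (B β)) (a := lift0 β γ) (b := lift0 β α ⊓ lift1 β α)
          (γ.refl p.1.1)
      have hmid2 : (lift0 β γ ⊔ (lift0 β α ⊓ lift1 β α)).r
          (⟨(p.1.1, p.1.1), β.refl _⟩ : B β) ⟨(q.1.1, q.1.1), β.refl _⟩ :=
        le_sup_right (α := Setoid (B β)) (a := lift0 β γ) (b := lift0 β α ⊓ lift1 β α)
          ⟨h, h⟩
      have hmid3 : (lift0 β γ ⊔ (lift0 β α ⊓ lift1 β α)).r
          (⟨(q.1.1, q.1.1), β.refl _⟩ : B β) q :=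
        le_sup_left (α := Setoid (B β)) (a := lift0 β γ) (b := lift0 β α ⊓ lift1 β α)
          (γ.refl q.1.1)
      exact Setoid.trans' _ (Setoid.trans' _ hmid1 hmid2) hmid3
  · apply le_antisymm
    · apply sup_le
      · intro p q h
        exact hle h
      · exact inf_le_right
    · intro p q h
      -- h : α.r p.1.2 q.1.2
      have hmid1 : (lift1 β γ ⊔ (lift0 β α ⊓ lift1 β α)).r p ⟨(p.1.2, p.1.2), β.refl _⟩ :=
        le_sup_left (α := Setoid (B β)) (a := lift1 β γ) (b := lift0 β α ⊓ lift1 β α)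
          (γ.refl p.1.2)
      have hmid2 : (lift1 β γ ⊔ (lift0 β α ⊓ lift1 β α)).r
          (⟨(p.1.2, p.1.2), β.refl _⟩ : B β) ⟨(q.1.2, q.1.2), β.refl _⟩ :=
        le_sup_right (α := Setoid (B β)) (a := lift1 β γ) (b := lift0 β α ⊓ lift1 β α)
          ⟨h, h⟩
      have hmid3 : (lift1 β γ ⊔ (lift0 β α ⊓ lift1 β α)).r
          (⟨(q.1.2, q.1.2), β.refl _⟩ : B β) q :=
        le_sup_left (α := Setoid (B β)) (a := lift1 β γ) (b := lift0 β α ⊓ lift1 β α)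
          (γ.refl q.1.2)
      exact Setoid.trans' _ (Setoid.trans' _ hmid1 hmid2) hmid3

end Paper
end

section
/- Let α, β, γ be equivalence relations on a set A with γ < α, α ⊓ β = γ ⊓ β = ⊥, α ⊔ β = γ ⊔ β. Suppose (β ∘ γ ∘ β) ∩ α ⊆ γ (i.e., the chain γ⁰ = γ stabilizes immediately: γ¹ = γ⁰). Then on B = {(x,y) : x β y}, the five equivalence relations α₀, α₁, γ₀, γ₁, and α₀ ⊓ α₁ are pairwise distinct, γ₀ ⊓ α₁ = α₀ ⊓ γ₁ = γ₀ ⊓ γ₁, and γ₀ ⊔ γ₁ = α₀ ⊔ α₁. -/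
namespace Paper

variable {A : Type*}

/-- diagonal element of B -/
def diag (β : Setoid A) (a : A) : B β := ⟨(a, a), β.refl a⟩

lemma rel_of_eq {X : Type*} {r s : Setoid X} (h : r = s) {x y : X} (hr : r.r x y) :
    s.r x y := h ▸ hr

lemma diag_chain (β γ : Setoid A) {a b : A} (h : (γ ⊔ β).r a b) :
    (lift0 β γ ⊔ lift1 β γ).r (diag β a) (diag β b) := by
  rw [Setoid.sup_eq_eqvGen] at h
  induction h with
  | rel x y hxy =>
    rcases hxy with hγ | hβ
    · exact le_sup_left (a := lift0 β γ) (b := lift1 β γ) hγ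
    · refine (lift0 β γ ⊔ lift1 β γ).trans
        (le_sup_left (a := lift0 β γ) (b := lift1 β γ)
          (show γ.r x x from γ.refl x) :
          (lift0 β γ ⊔ lift1 β γ).r (diag β x) ⟨(x, y), hβ⟩)
        (le_sup_right (a := lift0 β γ) (b := lift1 β γ)
          (show γ.r y y from γ.refl y))
  | refl x => exact (lift0 β γ ⊔ lift1 β γ).refl _
  | symm x y _ ih => exact (lift0 β γ ⊔ lift1 β γ).symm ih
  | trans x y z _ _ ih1 ih2 => exact (lift0 β γ ⊔ lift1 β γ).trans ih1 ih2

theorem stmt17 (α β γ : Setoid A) (hle : γ ≤ α) (hne : γ ≠ α) (hab : α ⊓ β = ⊥) (hgb : γ ⊓ β = ⊥) (hjoin : α ⊔ β = γ ⊔ β)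
    (hstab : ∀ a b, BGB α β γ a b → γ.r a b) :
    List.Pairwise (· ≠ ·)
      [lift0 β α, lift1 β α, lift0 β γ, lift1 β γ, lift0 β α ⊓ lift1 β α] ∧
    lift0 β γ ⊓ lift1 β α = lift0 β α ⊓ lift1 β γ ∧
    lift0 β α ⊓ lift1 β γ = lift0 β γ ⊓ lift1 β γ ∧
    lift0 β γ ⊔ lift1 β γ = lift0 β α ⊔ lift1 β α := by
  -- basic consequences
  have meet_ab : ∀ u v : A, α.r u v → β.r u v → u = v := by
    intro u v ha hb
    have h : (α ⊓ β).r u v := ⟨ha, hb⟩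
    rw [hab] at h
    exact h
  -- a witness where α holds but not γ
  obtain ⟨a, b, hαab, hγab⟩ : ∃ a b, α.r a b ∧ ¬ γ.r a b := by
    by_contra h
    push_neg at h
    exact hne (le_antisymm hle (Setoid.le_def.mpr fun {x y} hxy => h x y hxy))
  -- a nontrivial β-pair
  obtain ⟨u, v, hβuv, huv⟩ : ∃ u v, β.r u v ∧ u ≠ v := by
    by_contra h
    push_neg at h
    have hb : β = ⊥ := by
      apply le_antisymm _ bot_le
      exact Setoid.le_def.mpr fun {x y} hxy => (h x y hxy) ▸ (⊥ : Setoid A).refl x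
    apply hne
    have := hjoin
    rw [hb, sup_bot_eq, sup_bot_eq] at this
    exact this.symm
  -- the key witnesses in B
  have hβuu : β.r u u := β.refl u
  set p : B β := ⟨(u, v), hβuv⟩ with hp
  set q : B β := diag β u with hq
  -- ¬ α.r v u (else u = v)
  have hαvu : ¬ α.r v u := fun h => huv ((meet_ab v u h (β.symm hβuv)).symm)
  have hγvu : ¬ γ.r v u := fun h => hαvu (hle h)
  have hαuv : ¬ α.r u v := fun h => hαvu (α.symm h)
  have hγuv : ¬ γ.r u v := fun h => hαuv (hle h)
  refine ⟨?_, ?_, ?_, ?_⟩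
  · -- pairwise distinct
    have w0 : ∀ (θ η : Setoid A), (¬ η.r v u) → lift0 β θ ≠ lift1 β η := by
      intro θ η hη h
      exact hη (rel_of_eq h (x := p) (y := q) (θ.refl u))
    have w1 : ∀ (θ η : Setoid A), (¬ η.r v u) → lift1 β θ ≠ lift0 β η := by
      intro θ η hη h
      exact hη (rel_of_eq h (x := (⟨(v, u), β.symm hβuv⟩ : B β)) (y := diag β u) (θ.refl u))
    have w2 : lift0 β α ≠ lift0 β γ := by
      intro h
      exact hγab (rel_of_eq h (x := diag β a) (y := diag β b) hαab)
    have w3 : lift1 β α ≠ lift1 β γ := by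
      intro h
      exact hγab (rel_of_eq h (x := diag β a) (y := diag β b) hαab)
    have w4 : ∀ θ : Setoid A, lift0 β θ ≠ lift0 β α ⊓ lift1 β α := by
      intro θ h
      exact hαvu (rel_of_eq h (x := p) (y := q) (θ.refl u)).2
    have w5 : ∀ θ : Setoid A, lift1 β θ ≠ lift0 β α ⊓ lift1 β α := by
      intro θ h
      exact hαvu (rel_of_eq h (x := (⟨(v, u), β.symm hβuv⟩ : B β)) (y := diag β u) (θ.refl u)).1
    refine List.Pairwise.cons ?_ (List.Pairwise.cons ?_ (List.Pairwise.cons ?_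
      (List.Pairwise.cons ?_ (List.pairwise_singleton _ _))))
    · intro x hx
      simp only [List.mem_cons, List.mem_singleton, List.not_mem_nil, or_false] at hx
      rcases hx with h|h|h|h <;> subst h
      · exact w0 α α hαvu
      · exact w2
      · exact w0 α γ hγvu
      · exact w4 α
    · intro x hx
      simp only [List.mem_cons, List.mem_singleton, List.not_mem_nil, or_false] at hx
      rcases hx with h|h|h <;> subst h
      · exact w1 α γ hγvu
      · exact w3
      · exact w5 α
    · intro x hx
      simp only [List.mem_cons, List.mem_singleton, List.not_mem_nil, or_false] at hx
      rcases hx with h|h <;> subst h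
      · exact w0 γ γ hγvu
      · exact w4 γ
    · intro x hx
      simp only [List.mem_cons, List.mem_singleton, List.not_mem_nil, or_false] at hx
      subst hx
      exact w5 γ
  · -- γ₀ ⊓ α₁ = α₀ ⊓ γ₁
    apply Setoid.ext
    intro x y
    constructor
    · rintro ⟨h0, h1⟩
      refine ⟨hle h0, ?_⟩
      exact hstab _ _ ⟨⟨x.1.1, β.symm x.2, y.1.1, h0, y.2⟩, h1⟩
    · rintro ⟨h0, h1⟩
      refine ⟨?_, hle h1⟩
      exact hstab _ _ ⟨⟨x.1.2, x.2, y.1.2, h1, β.symm y.2⟩, h0⟩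
  · -- α₀ ⊓ γ₁ = γ₀ ⊓ γ₁
    apply Setoid.ext
    intro x y
    constructor
    · rintro ⟨h0, h1⟩
      refine ⟨?_, h1⟩
      exact hstab _ _ ⟨⟨x.1.2, x.2, y.1.2, h1, β.symm y.2⟩, h0⟩
    · rintro ⟨h0, h1⟩
      exact ⟨hle h0, h1⟩
  · -- joins
    have hαγβ : α ≤ γ ⊔ β := hjoin ▸ le_sup_left
    have key0 : lift0 β α ≤ lift0 β γ ⊔ lift1 β γ := by
      intro x y h
      have hc := diag_chain β γ (hαγβ h)
      have s1 : (lift0 β γ ⊔ lift1 β γ).r x (diag β x.1.1) :=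
        le_sup_left (a := lift0 β γ) (b := lift1 β γ) (γ.refl x.1.1)
      have s2 : (lift0 β γ ⊔ lift1 β γ).r (diag β y.1.1) y :=
        le_sup_left (a := lift0 β γ) (b := lift1 β γ) (γ.refl y.1.1)
      exact (lift0 β γ ⊔ lift1 β γ).trans s1 ((lift0 β γ ⊔ lift1 β γ).trans hc s2)
    have key1 : lift1 β α ≤ lift0 β γ ⊔ lift1 β γ := by
      intro x y h
      have hc := diag_chain β γ (hαγβ h)
      have s1 : (lift0 β γ ⊔ lift1 β γ).r x (diag β x.1.2) :=
        le_sup_right (a := lift0 β γ) (b := lift1 β γ) (γ.refl x.1.2)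
      have s2 : (lift0 β γ ⊔ lift1 β γ).r (diag β y.1.2) y :=
        le_sup_right (a := lift0 β γ) (b := lift1 β γ) (γ.refl y.1.2)
      exact (lift0 β γ ⊔ lift1 β γ).trans s1 ((lift0 β γ ⊔ lift1 β γ).trans hc s2)
    apply le_antisymm
    · exact sup_le
        (le_trans (fun x y h => hle h : lift0 β γ ≤ lift0 β α) le_sup_left)
        (le_trans (fun x y h => hle h : lift1 β γ ≤ lift1 β α) le_sup_right)
    · exact sup_le key0 key1

end Paper
end

section
/- Let α, β, γ be equivalence relations on a set A with γ < α, α ⊓ β = γ ⊓ β = ⊥, α ⊔ β = γ ⊔ β, and suppose there exists (a,b) ∈ ((β ∘ γ ∘ β) ∩ α) \ γ. Then on B = {(x,y) : x β y} one has the strict chain γ₀ ⊓ γ₁ < α₀ ⊓ γ₁ and γ₀ ⊓ γ₁ < γ₀ ⊓ α₁. -/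
namespace Paper

variable {A : Type*}

theorem stmt19 (α β γ : Setoid A) (hle : γ ≤ α) (hne : γ ≠ α) (hab : α ⊓ β = ⊥) (hgb : γ ⊓ β = ⊥) (hjoin : α ⊔ β = γ ⊔ β)
    (hex : ∃ a b, BGB α β γ a b ∧ ¬ γ.r a b) :
    lift0 β γ ⊓ lift1 β γ < lift0 β α ⊓ lift1 β γ ∧
      lift0 β γ ⊓ lift1 β γ < lift0 β γ ⊓ lift1 β α := by
  obtain ⟨a, b, ⟨⟨x₁, hax₁, x₂, hx₁x₂, hx₂b⟩, hαab⟩, hnγab⟩ := hex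
  constructor
  · constructor
    · intro p q h
      exact ⟨hle h.1, h.2⟩
    · intro hcon
      have h := @hcon ⟨(a, x₁), hax₁⟩ ⟨(b, x₂), β.symm hx₂b⟩ ⟨hαab, hx₁x₂⟩
      exact hnγab h.1
  · constructor
    · intro p q h
      exact ⟨h.1, hle h.2⟩
    · intro hcon
      have h := @hcon ⟨(x₁, a), β.symm hax₁⟩ ⟨(x₂, b), hx₂b⟩ ⟨hx₁x₂, hαab⟩
      exact hnγab h.2

end Paper
end
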